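/- arXiv:1203.1398 — 2 statements merged into one kernel-verified Lean document; each statement's English description precedes it below -/
import Mathlib

section
/- Let G be a simple graph on n vertices, with n/2 < k < n, such that every vertex subset F with |F| = k induces a connected subgraph of G. Then G is (n-k+1)-vertex-connected. -/
/-- A graph on a finite vertex set is `m`-vertex-connected if it has more than `m`
vertices and stays connected after deleting any set of fewer than `m` vertices. -/
def IsKConnected {V : Type*} [Fintype V] (G : SimpleGraph V) (m : ℕ) : Prop :=
  m < Fintype.card V ∧
    ∀ S : Finset V, S.card < m → (G.induce ((↑S : Set V)ᶜ)).Connected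

theorem stmt8 {V : Type*} [Fintype V] [DecidableEq V] (G : SimpleGraph V) (n k : ℕ)
    (hn : Fintype.card V = n) (hk1 : n < 2 * k) (hk2 : k < n)
    (hind : ∀ F : Finset V, F.card = k → (G.induce (↑F : Set V)).Connected) :
    IsKConnected G (n - k + 1) := by
  subst hn
  have hk2' : 2 ≤ k := by omega
  constructor
  · omega
  · intro S hS
    have hScomp : k ≤ Sᶜ.card := by
      have := Finset.card_compl S
      omega
    have hne : ((↑S : Set V)ᶜ).Nonempty := by
      obtain ⟨x, hx⟩ := Finset.card_pos.mp (by omega : 0 < Sᶜ.card)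
      exact ⟨x, by simpa using hx⟩
    rw [SimpleGraph.connected_iff]
    refine ⟨?_, hne.to_subtype⟩
    rintro ⟨u, hu⟩ ⟨v, hv⟩
    have hu' : u ∈ Sᶜ := by simpa using hu
    have hv' : v ∈ Sᶜ := by simpa using hv
    have hsub : ({u, v} : Finset V) ⊆ Sᶜ := by
      intro x hx
      rcases Finset.mem_insert.mp hx with h | h
      · exact h ▸ hu'
      · exact (Finset.mem_singleton.mp h) ▸ hv'
    obtain ⟨F, hLF, hFS, hFcard⟩ := Finset.exists_subsuperset_card_eq hsub
      (le_trans (Finset.card_insert_le _ _) (by simp [hk2'])) hScomp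
    have hFconn := hind F hFcard
    have huF : u ∈ (↑F : Set V) := hLF (by simp)
    have hvF : v ∈ (↑F : Set V) := hLF (by simp)
    have hFsub : (↑F : Set V) ⊆ (↑S : Set V)ᶜ := by
      intro x hx
      simpa using hFS hx
    let φ : G.induce (↑F : Set V) →g G.induce ((↑S : Set V)ᶜ) :=
      ⟨fun x => ⟨x.1, hFsub x.2⟩, fun {a b} h => h⟩
    have := hFconn.preconnected ⟨u, huF⟩ ⟨v, hvF⟩
    exact this.map φ
end

section
/- Let S be a finite set with n ≥ 1 elements, let c ≥ 1, and let w : S → ℝ_{>0} be a weight function. Then there exists a partition of S into c classes A₁, ..., A_c with w(A₁) ≥ w(A₂) ≥ ... ≥ w(A_c) such that for every index i and every v ∈ A_i, we have w(A_i) - w(v) ≤ w(A_c). -/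
/-!
Encode a partition of `S` into `c` classes by an assignment `f : S → Fin c` and choose one
minimising the energy `∑ₖ w(Aₖ)²`. Moving `v` from `Aᵢ` to `Aⱼ` changes the energy by
`2 w(v) (w(v) + w(Aⱼ) - w(Aᵢ))`, so at a minimiser `w(Aᵢ) - w(v) ≤ w(Aⱼ)` for every class `Aⱼ`,
in particular for the lightest one. Relabelling the classes in order of decreasing weight
preserves this.
-/

open Finset Function

theorem Tuple.exists_perm_antitone {β : Type*} [LinearOrder β] {n : ℕ} (g : Fin n → β) :
    ∃ σ : Equiv.Perm (Fin n), Antitone (g ∘ σ) :=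
  ⟨Tuple.sort g * Fin.revPerm, by
    simpa [comp_def] using (Tuple.monotone_sort g).comp_antitone Fin.rev_anti⟩

namespace BalancedPartition

variable {α κ : Type*} [Fintype α] [DecidableEq κ] (w : α → ℝ)

def classWeight (f : α → κ) (k : κ) : ℝ := ∑ a with f a = k, w a

def energy [Fintype κ] (f : α → κ) : ℝ := ∑ k, classWeight w f k ^ 2

theorem classWeight_update [DecidableEq α] (f : α → κ) (a : α) (j k : κ) :
    classWeight w (update f a j) k =
      classWeight w f k - (if f a = k then w a else 0) + (if j = k then w a else 0) := by
  simp only [classWeight, sum_filter]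
  rw [← add_sum_erase _ _ (mem_univ a), ← add_sum_erase _ _ (mem_univ a)]
  have hrest : ∀ b ∈ univ.erase a,
      (if update f a j b = k then w b else 0) = if f b = k then w b else 0 := by
    intro b hb
    rw [update_of_ne (ne_of_mem_erase hb)]
  rw [sum_congr rfl hrest]
  simp only [update_self]
  ring

theorem energy_update_of_ne [Fintype κ] [DecidableEq α] {f : α → κ} {a : α} {j : κ}
    (h : f a ≠ j) :
    energy w (update f a j) =
      energy w f + 2 * w a * (w a + classWeight w f j - classWeight w f (f a)) := by
  simp only [energy, classWeight_update]
  have hsq : ∀ k,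
      (classWeight w f k - (if f a = k then w a else 0) + (if j = k then w a else 0)) ^ 2 =
      classWeight w f k ^ 2 + ((if j = k then 2 * w a * classWeight w f j + w a ^ 2 else 0)
        - (if f a = k then 2 * w a * classWeight w f (f a) - w a ^ 2 else 0)) := by
    intro k
    by_cases hj : j = k <;> by_cases hi : f a = k <;>
      simp only [hj, hi, if_true, if_false] <;> grind
  simp only [hsq, sum_add_distrib, sum_sub_distrib, sum_ite_eq, mem_univ, if_true]
  ring

theorem classWeight_perm_symm_comp (σ : Equiv.Perm κ) (f : α → κ) (k : κ) :
    classWeight w (fun a => σ.symm (f a)) k = classWeight w f (σ k) := by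
  simp [classWeight, Equiv.symm_apply_eq]

theorem sub_le_classWeight_of_forall_energy_le [Fintype κ] [DecidableEq α] {f : α → κ}
    (hf : ∀ f' : α → κ, energy w f ≤ energy w f') {a : α} (ha : 0 < w a) (k : κ) :
    classWeight w f (f a) - w a ≤ classWeight w f k := by
  by_cases hk : f a = k
  · rw [hk]; linarith
  · have hmove := hf (update f a k)
    rw [energy_update_of_ne w hk] at hmove
    nlinarith

theorem exists_antitone_balanced (hw : ∀ a, 0 < w a) (c : ℕ) [NeZero c] :
    ∃ f : α → Fin c, Antitone (classWeight w f) ∧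
      ∀ a k, classWeight w f (f a) - w a ≤ classWeight w f k := by
  classical
  obtain ⟨f, hf⟩ := Finite.exists_min (energy w : (α → Fin c) → ℝ)
  obtain ⟨σ, hσ⟩ := Tuple.exists_perm_antitone (classWeight w f)
  refine ⟨fun a => σ.symm (f a), ?_, fun a k => ?_⟩
  · intro i j hij
    rw [classWeight_perm_symm_comp, classWeight_perm_symm_comp]
    exact hσ hij
  · simpa only [classWeight_perm_symm_comp, Equiv.apply_symm_apply]
      using sub_le_classWeight_of_forall_energy_le w hf (hw a) (σ k)

end BalancedPartition

open BalancedPartition in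
theorem stmt12 {ι : Type*} [DecidableEq ι] (S : Finset ι)
    (c : ℕ) (hc : 1 ≤ c) (w : ι → ℝ) (hw : ∀ i ∈ S, 0 < w i) :
    ∃ A : Fin c → Finset ι,
      (∀ i j, i ≠ j → Disjoint (A i) (A j)) ∧
      Finset.univ.biUnion A = S ∧
      (∀ i j : Fin c, i ≤ j → ∑ v ∈ A j, w v ≤ ∑ v ∈ A i, w v) ∧
      (∀ i : Fin c, ∀ v ∈ A i,
        ∑ u ∈ A i, w u - w v ≤ ∑ u ∈ A ⟨c - 1, by omega⟩, w u) := by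
  have : NeZero c := ⟨by omega⟩
  obtain ⟨f, hanti, hbal⟩ := exists_antitone_balanced (fun v : S => w v) (fun v => hw v v.2) c
  let A k : Finset ι := ({v | f v = k} : Finset S).map (Embedding.subtype _)
  have hA : ∀ k, ∑ u ∈ A k, w u = classWeight (fun v : S => w v) f k := fun k => sum_map _ _ _
  refine ⟨A, fun i j hij => ?_, ?_, fun i j hij => ?_, fun i v hv => ?_⟩
  · simp only [A, disjoint_map, disjoint_filter]
    rintro v - rfl
    exact hij
  · ext v
    simp [A]
  · simpa only [hA] using hanti hij
  · simp only [A, mem_map, mem_filter] at hv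
    obtain ⟨v, ⟨-, rfl⟩, rfl⟩ := hv
    simpa only [hA, Embedding.coe_subtype] using hbal v _
end
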